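/- arXiv:2210.00816 — 10 statements merged into one kernel-verified Lean document; each statement's English description precedes it below -/
import Mathlib

section
/- For all natural numbers a ≥ 1 and i, the number f_a + f_{a+i} belongs to the numerical semigroup (additive submonoid of ℕ) generated by f_a + f_0 and f_a + f_{a-1}; concretely, f_a + f_{a+i} = (f_{i-1}+1)·(f_a+f_0) + f_i·(f_a+f_{a-1}) when i ≥ 1. -/
/-!
The addition formula `f (a + i) = f (a - 1) * f i + f a * f (i + 1)` together with
`f (i + 1) = f (i - 1) + f i` gives `f (a + i) = f (i - 1) * f a + f i * (f a + f (a - 1))`;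
for `i = 0` the sum is just `2 * f a`.
-/

namespace Nat

theorem fib_add_fib_add_eq {a i : ℕ} (ha : a ≠ 0) (hi : i ≠ 0) :
    fib a + fib (a + i) = (fib (i - 1) + 1) * fib a + fib i * (fib a + fib (a - 1)) := by
  obtain ⟨b, rfl⟩ := exists_eq_add_one_of_ne_zero ha
  obtain ⟨j, rfl⟩ := exists_eq_add_one_of_ne_zero hi
  have hsplit : fib (b + 1 + (j + 1)) = fib b * fib (j + 1) + fib (b + 1) * fib (j + 2) := by
    rw [← fib_add, add_right_comm]
  rw [hsplit, fib_add_two, add_tsub_cancel_right, add_tsub_cancel_right]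
  ring

end Nat

theorem fib_mem_closure (a i : ℕ) (ha : 1 ≤ a) :
    Nat.fib a + Nat.fib (a + i) ∈
      AddSubmonoid.closure {Nat.fib a + Nat.fib 0, Nat.fib a + Nat.fib (a - 1)} ∧
    (1 ≤ i → Nat.fib a + Nat.fib (a + i) =
      (Nat.fib (i - 1) + 1) * (Nat.fib a + Nat.fib 0) +
        Nat.fib i * (Nat.fib a + Nat.fib (a - 1))) := by
  have hformula : 1 ≤ i → Nat.fib a + Nat.fib (a + i) =
      (Nat.fib (i - 1) + 1) * (Nat.fib a + Nat.fib 0) +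
        Nat.fib i * (Nat.fib a + Nat.fib (a - 1)) := fun hi => by
    rw [Nat.fib_zero, add_zero]
    exact Nat.fib_add_fib_add_eq (by omega) (by omega)
  refine ⟨?_, hformula⟩
  rw [AddSubmonoid.mem_closure_pair]
  rcases Nat.eq_zero_or_pos i with rfl | hi
  · exact ⟨2, 0, by simp [two_mul]⟩
  · exact ⟨_, _, (hformula hi).symm⟩
end

section
/- For all natural numbers a ≥ 3, gcd(f_a, f_a + 1) = 1, and hence the additive submonoid of ℕ generated by {f_a + f_n : n ∈ ℕ} has finite complement in ℕ (i.e., is a numerical semigroup). -/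
def S (a : ℕ) : AddSubmonoid ℕ :=
  AddSubmonoid.closure {m : ℕ | ∃ n : ℕ, m = Nat.fib a + Nat.fib n}

/-!
Since `f_a` and `f_a + 1` are consecutive they are coprime, and both lie in `S a`
(take `n = 0` and `n = 1`). A submonoid of `ℕ` containing two consecutive numbers `x` and `x + 1`
contains every `n ≥ x²`: writing `n = x q + r` with `r < x ≤ q` gives
`n = (q - r) x + r (x + 1)`.
-/

namespace AddSubmonoid

variable (M : AddSubmonoid ℕ) {x : ℕ}

theorem mul_add_mem_of_le (hx : x ∈ M) (hx₁ : x + 1 ∈ M) {q r : ℕ} (hrq : r ≤ q) :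
    x * q + r ∈ M := by
  have hsplit : x * q + r = (q - r) • x + r • (x + 1) := by
    obtain ⟨d, rfl⟩ := Nat.exists_eq_add_of_le hrq
    simp only [smul_eq_mul, Nat.add_sub_cancel_left]
    ring
  rw [hsplit]
  exact add_mem (nsmul_mem hx _) (nsmul_mem hx₁ _)

theorem mem_of_mul_self_le (hx₀ : 0 < x) (hx : x ∈ M) (hx₁ : x + 1 ∈ M) {n : ℕ}
    (hn : x * x ≤ n) : n ∈ M := by
  have hxq : x ≤ n / x := (Nat.le_div_iff_mul_le hx₀).mpr hn
  rw [← Nat.div_add_mod n x]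
  exact M.mul_add_mem_of_le hx hx₁ ((Nat.mod_lt n hx₀).le.trans hxq)

theorem finite_setOf_notMem_of_mem_of_add_one_mem (hx₀ : 0 < x) (hx : x ∈ M)
    (hx₁ : x + 1 ∈ M) : {n : ℕ | n ∉ M}.Finite :=
  (Set.finite_Iio (x * x)).subset fun _ hn ↦
    Set.mem_Iio.mpr (not_le.mp fun h ↦ hn (M.mem_of_mul_self_le hx₀ hx hx₁ h))

end AddSubmonoid

theorem fib_add_fib_mem_S (a n : ℕ) : Nat.fib a + Nat.fib n ∈ S a :=
  AddSubmonoid.subset_closure ⟨n, rfl⟩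

theorem gcd_one_and_numerical (a : ℕ) (ha : 3 ≤ a) :
    Nat.gcd (Nat.fib a) (Nat.fib a + 1) = 1 ∧ {n : ℕ | n ∉ S a}.Finite := by
  refine ⟨Nat.coprime_self_add_right.mpr (Nat.coprime_one_right _), ?_⟩
  have hfib_pos : 0 < Nat.fib a := Nat.fib_pos.mpr (by omega)
  have hfib_mem : Nat.fib a ∈ S a := by simpa using fib_add_fib_mem_S a 0
  have hfib_succ_mem : Nat.fib a + 1 ∈ S a := by simpa using fib_add_fib_mem_S a 1
  exact (S a).finite_setOf_notMem_of_mem_of_add_one_mem hfib_pos hfib_mem hfib_succ_mem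
end

section
/- For a ≥ 3, the numerical semigroup S(a) generated by {f_a + f_n : n ∈ ℕ} is also generated by the finite set {f_a + f_0, f_a + f_2, f_a + f_3, ..., f_a + f_{a-1}}. -/
theorem Nat.fib_add_mem_of_fib_mem {M : AddSubmonoid ℕ} {a : ℕ}
    (h₀ : Nat.fib a ∈ M) (h₁ : Nat.fib (a + 1) ∈ M) (n : ℕ) : Nat.fib (a + n) ∈ M := by
  suffices Nat.fib (a + n) ∈ M ∧ Nat.fib (a + n + 1) ∈ M from this.1
  induction n with
  | zero => exact ⟨h₀, h₁⟩
  | succ n ih =>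
    refine ⟨ih.2, ?_⟩
    rw [← add_assoc, Nat.fib_add_one (by omega), Nat.add_sub_cancel]
    exact add_mem ih.1 ih.2

theorem S_finitely_generated (a : ℕ) (ha : 3 ≤ a) :
    S a = AddSubmonoid.closure
      ((fun n => Nat.fib a + Nat.fib n) '' insert 0 (Set.Icc 2 (a - 1))) := by
  set T := AddSubmonoid.closure
    ((fun n => Nat.fib a + Nat.fib n) '' insert 0 (Set.Icc 2 (a - 1)))
  have generator_mem {n : ℕ} (hn : n = 0 ∨ 2 ≤ n ∧ n ≤ a - 1) : Nat.fib a + Nat.fib n ∈ T :=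
    AddSubmonoid.subset_closure (Set.mem_image_of_mem _ hn)
  have fib_a_mem : Nat.fib a ∈ T := by simpa using generator_mem (n := 0) (by simp)
  have fib_succ_mem : Nat.fib (a + 1) ∈ T := by
    rw [Nat.fib_add_one (by omega), add_comm]
    exact generator_mem (by omega)
  refine le_antisymm (AddSubmonoid.closure_le.2 ?_)
    (AddSubmonoid.closure_mono fun _ ⟨n, _, hm⟩ => ⟨n, hm.symm⟩)
  rintro _ ⟨n, rfl⟩
  rcases le_or_gt a n with h | h
  · obtain ⟨k, rfl⟩ := Nat.exists_eq_add_of_le h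
    exact add_mem fib_a_mem (Nat.fib_add_mem_of_fib_mem fib_a_mem fib_succ_mem k)
  · obtain rfl | hn := eq_or_ne n 1
    · exact generator_mem (n := 2) (by omega)
    · exact generator_mem (by omega)
end

section
/- For a ≥ 3, the set {f_a + f_0, f_a + f_2, ..., f_a + f_{a-1}} is the minimal system of generators of S(a); in particular, the embedding dimension of S(a) equals a − 1. -/
namespace Nat

theorem fib_strictMonoOn_ne_one : StrictMonoOn fib {n | n ≠ 1} := by
  intro m hm n _ hmn
  rcases Nat.lt_or_ge m 2 with hm2 | hm2
  · obtain rfl : m = 0 := by have : m ≠ 1 := hm; omega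
    simpa using hmn
  · exact (fib_lt_fib hm2).2 hmn

theorem fib_mem_of_le {M : AddSubmonoid ℕ} {a m : ℕ} (ha : fib a ∈ M)
    (ha_succ : fib (a + 1) ∈ M) (ham : a ≤ m) : fib m ∈ M := by
  have consecutive : ∀ k, fib (a + k) ∈ M ∧ fib (a + k + 1) ∈ M := by
    intro k
    induction k with
    | zero => exact ⟨ha, ha_succ⟩
    | succ k ih =>
      refine ⟨ih.2, ?_⟩
      rw [show a + (k + 1) + 1 = a + k + 2 by omega, fib_add_two]
      exact add_mem ih.1 ih.2
  obtain ⟨k, rfl⟩ := Nat.exists_eq_add_of_le ham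
  exact (consecutive k).1

end Nat

namespace AddSubmonoid

theorem mem_of_mem_closure_of_lt_two_mul {c : ℕ} {Y : Set ℕ} (hY : ∀ y ∈ Y, c ≤ y)
    {x : ℕ} (hx : x ∈ closure Y) (hx₀ : x ≠ 0) (hxc : x < 2 * c) : x ∈ Y := by
  suffices ∀ z ∈ closure Y, z = 0 ∨ z ∈ Y ∨ 2 * c ≤ z by
    exact ((this x hx).resolve_left hx₀).resolve_right (by omega)
  intro z hz
  induction hz using closure_induction with
  | mem y hy => exact .inr (.inl hy)
  | zero => exact .inl rfl
  | add p q _ _ hp hq =>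
    rcases hp with rfl | hp | hp
    · simpa using hq
    · rcases hq with rfl | hq | hq
      · simpa using .inr (.inl hp)
      · have := hY p hp; have := hY q hq; omega
      · omega
    · omega

theorem closure_ne_closure_of_ssubset_of_subset_Ico {c : ℕ} {X Y : Set ℕ}
    (hX : X ⊆ Set.Ico c (2 * c)) (hYX : Y ⊂ X) : closure Y ≠ closure X := by
  intro hclosure
  obtain ⟨x, hxX, hxY⟩ := Set.exists_of_ssubset hYX
  have hx : x ∈ closure Y := hclosure ▸ subset_closure hxX
  exact hxY <| mem_of_mem_closure_of_lt_two_mul (fun y hy => (hX (hYX.subset hy)).1) hx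
    (by have := hX hxX; simp only [Set.mem_Ico] at this; omega) (hX hxX).2

end AddSubmonoid

theorem closure_fib_add_fib_image_eq_S {a : ℕ} (ha : 3 ≤ a) :
    AddSubmonoid.closure ((fun n => Nat.fib a + Nat.fib n) '' insert 0 (Set.Icc 2 (a - 1))) =
      S a := by
  set X := (fun n => Nat.fib a + Nat.fib n) '' insert 0 (Set.Icc 2 (a - 1))
  refine le_antisymm (AddSubmonoid.closure_le.2 ?_) (AddSubmonoid.closure_le.2 ?_)
  · rintro _ ⟨n, -, rfl⟩
    exact AddSubmonoid.subset_closure ⟨n, rfl⟩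
  rintro _ ⟨n, rfl⟩
  have generator : ∀ n ∈ insert 0 (Set.Icc 2 (a - 1)),
      Nat.fib a + Nat.fib n ∈ AddSubmonoid.closure X :=
    fun n hn => AddSubmonoid.subset_closure (Set.mem_image_of_mem _ hn)
  have fib_a : Nat.fib a ∈ AddSubmonoid.closure X := by
    simpa using generator 0 (Set.mem_insert _ _)
  rcases lt_or_ge n a with hna | hna
  · obtain rfl | rfl | hn2 : n = 0 ∨ n = 1 ∨ 2 ≤ n := by omega
    · exact generator 0 (Set.mem_insert _ _)
    · simpa using generator 2 (Set.mem_insert_of_mem _ ⟨le_rfl, by omega⟩)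
    · exact generator n (Set.mem_insert_of_mem _ ⟨hn2, by omega⟩)
  · have fib_succ_a : Nat.fib (a + 1) ∈ AddSubmonoid.closure X := by
      rw [Nat.fib_add_one (by omega), add_comm]
      exact generator (a - 1) (Set.mem_insert_of_mem _ ⟨by omega, le_rfl⟩)
    exact add_mem fib_a (Nat.fib_mem_of_le fib_a fib_succ_a hna)

theorem msg_S (a : ℕ) (ha : 3 ≤ a) :
    AddSubmonoid.closure
        ((fun n => Nat.fib a + Nat.fib n) '' insert 0 (Set.Icc 2 (a - 1))) = S a ∧
    (∀ Y ⊂ (fun n => Nat.fib a + Nat.fib n) '' insert 0 (Set.Icc 2 (a - 1)),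
        AddSubmonoid.closure Y ≠ S a) ∧
    ((fun n => Nat.fib a + Nat.fib n) '' insert 0 (Set.Icc 2 (a - 1))).ncard = a - 1 := by
  have index_ne_one : insert 0 (Set.Icc 2 (a - 1)) ⊆ {n | n ≠ 1} := by
    rintro n (rfl | ⟨hn, -⟩) <;> (show _ ≠ 1; omega)
  have fib_lt : ∀ n ∈ insert 0 (Set.Icc 2 (a - 1)), Nat.fib n < Nat.fib a := by
    rintro n hn
    refine Nat.fib_strictMonoOn_ne_one (index_ne_one hn) (show a ≠ 1 by omega) ?_
    rcases hn with rfl | ⟨-, hn⟩ <;> omega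
  refine ⟨closure_fib_add_fib_image_eq_S ha, fun Y hY => ?_, ?_⟩
  · rw [← closure_fib_add_fib_image_eq_S ha]
    refine AddSubmonoid.closure_ne_closure_of_ssubset_of_subset_Ico (c := Nat.fib a) ?_ hY
    rintro _ ⟨n, hn, rfl⟩
    exact ⟨Nat.le_add_right _ _, by have := fib_lt n hn; dsimp only; omega⟩
  · have injective :
        Set.InjOn (fun n => Nat.fib a + Nat.fib n) (insert 0 (Set.Icc 2 (a - 1))) :=
      (add_right_injective _).comp_injOn (Nat.fib_strictMonoOn_ne_one.injOn.mono index_ne_one)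
    rw [injective.ncard_image, Set.ncard_insert_of_notMem (by simp), Set.ncard_Icc_nat]
    omega
end

section
/- For all natural numbers a ≥ 3, every Fibonacci number f_n with n ≥ a belongs to S(a). -/
theorem AddSubmonoid.fib_mem_of_le {M : AddSubmonoid ℕ} {a n : ℕ} (h₀ : Nat.fib a ∈ M)
    (h₁ : Nat.fib (a + 1) ∈ M) (hn : a ≤ n) : Nat.fib n ∈ M := by
  have consecutive : ∀ k, Nat.fib (a + k) ∈ M ∧ Nat.fib (a + k + 1) ∈ M := by
    intro k
    induction k with
    | zero => exact ⟨h₀, h₁⟩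
    | succ k ih =>
      refine ⟨ih.2, ?_⟩
      rw [show a + (k + 1) + 1 = a + k + 2 by ring, Nat.fib_add_two]
      exact add_mem ih.1 ih.2
  obtain ⟨k, rfl⟩ := Nat.exists_eq_add_of_le hn
  exact (consecutive k).1

theorem fib_mem_S_self (a : ℕ) : Nat.fib a ∈ S a := by
  simpa using fib_add_fib_mem_S a 0

theorem fib_succ_mem_S (a : ℕ) : Nat.fib (a + 1) ∈ S a := by
  cases a with
  | zero => simpa using fib_add_fib_mem_S 0 1
  | succ a =>
    rw [Nat.fib_add_two, add_comm (Nat.fib a)]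
    exact fib_add_fib_mem_S (a + 1) a

theorem fib_mem_S_general (a : ℕ) (n : ℕ) (hn : a ≤ n) :
    Nat.fib n ∈ S a :=
  AddSubmonoid.fib_mem_of_le (fib_mem_S_self a) (fib_succ_mem_S a) hn

theorem fib_mem_S (a : ℕ) (ha : 3 ≤ a) (n : ℕ) (hn : a ≤ n) :
    Nat.fib n ∈ S a :=
  fib_mem_S_general a n hn
end

section
/- Let a ≥ 3 and let (d_2, ..., d_{a-1}) be natural numbers with Σ_{i=2}^{a-1} d_i·f_i ≥ f_a. Then there exist natural numbers (c_2, ..., c_{a-1}) such that Σ_{i=2}^{a-1} d_i·f_i = f_a + Σ_{i=2}^{a-1} c_i·f_i and Σ_{i=2}^{a-1} c_i < Σ_{i=2}^{a-1} d_i. -/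
/-!
Encode a representation by the multiset of its Fibonacci indices and induct on `a`. If the top
index `a - 1` occurs together with `a - 2`, drop both (`f a = f (a - 1) + f (a - 2)`); if it occurs
twice, replace the pair by `a - 3` (`2 f (a - 1) = f a + f (a - 3)`); if it occurs exactly once,
the other summands lie below `a - 2` and carry at least `f (a - 2)`, so induction at `a - 2`
applies. If `a - 1` does not occur, induction at `a - 1` trades summands worth `f (a - 1)` for one
copy of `a - 1` without increasing their number, which leads back to the first case. Indices `0`
and `1` produced along the way are dropped or replaced by `2` at the end.
-/

open Multiset Nat

def fibSum (s : Multiset ℕ) : ℕ := (s.map fib).sum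

@[simp] lemma fibSum_cons (i : ℕ) (s : Multiset ℕ) : fibSum (i ::ₘ s) = fib i + fibSum s := by
  simp [fibSum]

lemma fibSum_eq_zero_iff {s : Multiset ℕ} : fibSum s = 0 ↔ ∀ i ∈ s, i = 0 := by
  simp [fibSum, Multiset.sum_eq_zero_iff]

lemma sum_count_mul_fib {S : Finset ℕ} {s : Multiset ℕ} (hs : ∀ i ∈ s, i ∈ S) :
    ∑ i ∈ S, s.count i * fib i = fibSum s := by
  rw [fibSum, Finset.sum_multiset_map_count]
  refine (Finset.sum_subset (fun i hi => hs i (mem_toFinset.mp hi)) fun i _ hi => ?_).symm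
  simp [count_eq_zero_of_notMem (mt mem_toFinset.mpr hi)]

lemma exists_multiset_count_eq {α : Type*} [DecidableEq α] (S : Finset α) (d : α → ℕ) :
    ∃ s : Multiset α, (∀ i ∈ s, i ∈ S) ∧ ∀ i ∈ S, s.count i = d i := by
  refine ⟨∑ i ∈ S, d i • {i}, fun i hi => ?_, fun i hi => ?_⟩
  · obtain ⟨j, hj, hij⟩ := Multiset.mem_sum.mp hi
    rwa [Multiset.mem_singleton.mp (mem_of_mem_nsmul hij)]
  · simp [count_sum', count_singleton, hi]

lemma forall_lt_of_notMem {n : ℕ} {s : Multiset ℕ} (hs : ∀ i ∈ s, i < n + 1) (hn : n ∉ s) :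
    ∀ i ∈ s, i < n := fun i hi =>
  lt_of_le_of_ne (Nat.lt_succ_iff.mp (hs i hi)) fun h => hn (h ▸ hi)

lemma exists_fibSum_eq_of_two_le {a : ℕ} (ha : 2 < a) {t : Multiset ℕ} (ht : ∀ i ∈ t, i < a) :
    ∃ t' : Multiset ℕ, (∀ i ∈ t', 2 ≤ i ∧ i < a) ∧ fibSum t' = fibSum t ∧ card t' ≤ card t := by
  induction t using Multiset.induction_on with
  | empty => exact ⟨0, by simp⟩
  | cons i t ih =>
    obtain ⟨t', ht', hfib, hcard⟩ := ih fun j hj => ht j (mem_cons_of_mem hj)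
    have hi := ht i (mem_cons_self i t)
    rcases Nat.eq_zero_or_pos i with rfl | hpos
    · exact ⟨t', ht', by simp [hfib], by simp; omega⟩
    · have hfib_max : fib (max 2 i) = fib i := by
        rcases (show i = 1 ∨ 2 ≤ i by omega) with rfl | h2
        · rfl
        · rw [max_eq_right h2]
      refine ⟨max 2 i ::ₘ t', ?_, by simp [hfib_max, hfib], by simp [hcard]⟩
      simp only [mem_cons, forall_eq_or_imp]
      exact ⟨⟨le_max_left _ _, max_lt ha hi⟩, ht'⟩

def ExtractsFib (a : ℕ) (s : Multiset ℕ) : Prop :=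
  ∃ t : Multiset ℕ, (∀ i ∈ t, i < a) ∧ fibSum s = fib a + fibSum t ∧ card t < card s

lemma extractsFib_of_mem {n : ℕ}
    (ih : ∀ s : Multiset ℕ, (∀ i ∈ s, i < n + 1) → fib (n + 1) ≤ fibSum s → ExtractsFib (n + 1) s)
    {s : Multiset ℕ} (hs : ∀ i ∈ s, i < n + 3) (htop : n + 2 ∈ s) (h : fib (n + 3) ≤ fibSum s) :
    ExtractsFib (n + 3) s := by
  have fib3 : fib (n + 3) = fib (n + 2) + fib (n + 1) := by rw [fib_add_two, add_comm]
  have fib2 : fib (n + 2) = fib (n + 1) + fib n := by rw [fib_add_two, add_comm]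
  obtain ⟨s, rfl⟩ := exists_cons_of_mem htop
  have hs' : ∀ i ∈ s, i < n + 3 := fun i hi => hs i (mem_cons_of_mem hi)
  by_cases h1 : n + 1 ∈ s
  · obtain ⟨t, rfl⟩ := exists_cons_of_mem h1
    refine ⟨t, fun i hi => hs' i (mem_cons_of_mem hi), ?_, by simp⟩
    simp only [fibSum_cons, fib3]
    ring
  by_cases h2 : n + 2 ∈ s
  · obtain ⟨t, rfl⟩ := exists_cons_of_mem h2
    refine ⟨n ::ₘ t, ?_, ?_, by simp⟩
    · simp only [mem_cons, forall_eq_or_imp]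
      exact ⟨by omega, fun i hi => hs' i (mem_cons_of_mem hi)⟩
    · simp only [fibSum_cons]
      omega
  have hlow := forall_lt_of_notMem (forall_lt_of_notMem hs' h2) h1
  obtain ⟨t, ht, hst, hcard⟩ := ih s hlow (by simp only [fibSum_cons] at h; omega)
  refine ⟨t, fun i hi => (ht i hi).trans (by omega), ?_, ?_⟩
  · simp only [fibSum_cons, hst, fib3]
    ring
  · simp only [card_cons]
    omega

theorem extractsFib {a : ℕ} (ha : 0 < a) {s : Multiset ℕ} (hs : ∀ i ∈ s, i < a)
    (h : fib a ≤ fibSum s) : ExtractsFib a s := by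
  induction a using Nat.strong_induction_on generalizing s with
  | _ a ih =>
  have hne : ∃ i ∈ s, i ≠ 0 := by
    by_contra! hzero
    rw [fibSum_eq_zero_iff.mpr hzero, Nat.le_zero, fib_eq_zero] at h
    omega
  obtain _ | _ | _ | n := a
  · omega
  · obtain ⟨i, hi, hi0⟩ := hne
    exact absurd (hs i hi) (by omega)
  · obtain ⟨i, hi, hi0⟩ := hne
    obtain rfl : i = 1 := by have := hs i hi; omega
    obtain ⟨t, rfl⟩ := exists_cons_of_mem hi
    exact ⟨t, fun j hj => hs j (mem_cons_of_mem hj), by simp, by simp⟩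
  have ih1 := fun s => @ih (n + 1) (by omega) (by omega) s
  by_cases htop : n + 2 ∈ s
  · exact extractsFib_of_mem ih1 hs htop h
  obtain ⟨t, ht, hst, hcard⟩ := ih (n + 2) (by omega) (by omega) (forall_lt_of_notMem hs htop)
    ((fib_mono (by omega)).trans h)
  have ht' : ∀ i ∈ (n + 2) ::ₘ t, i < n + 3 := by
    simp only [mem_cons, forall_eq_or_imp]
    exact ⟨by omega, fun i hi => (ht i hi).trans (by omega)⟩
  obtain ⟨u, hu, htu, hcard'⟩ := extractsFib_of_mem ih1 ht' (mem_cons_self _ _)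
    (by rw [fibSum_cons, ← hst]; exact h)
  refine ⟨u, hu, by rw [hst, ← fibSum_cons, htu], ?_⟩
  simp only [card_cons] at hcard'
  omega

theorem reduce_representation (a : ℕ) (ha : 3 ≤ a) (d : ℕ → ℕ)
    (hd : Nat.fib a ≤ ∑ i ∈ Finset.Icc 2 (a - 1), d i * Nat.fib i) :
    ∃ c : ℕ → ℕ,
      ∑ i ∈ Finset.Icc 2 (a - 1), d i * Nat.fib i =
        Nat.fib a + ∑ i ∈ Finset.Icc 2 (a - 1), c i * Nat.fib i ∧
      ∑ i ∈ Finset.Icc 2 (a - 1), c i < ∑ i ∈ Finset.Icc 2 (a - 1), d i := by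
  have hIcc : ∀ i, i ∈ Finset.Icc 2 (a - 1) ↔ 2 ≤ i ∧ i < a := fun i => by
    rw [Finset.mem_Icc]; omega
  obtain ⟨s, hs, hsd⟩ := exists_multiset_count_eq (Finset.Icc 2 (a - 1)) d
  have hvalue : ∑ i ∈ Finset.Icc 2 (a - 1), d i * fib i = fibSum s := by
    rw [← sum_count_mul_fib hs]
    exact Finset.sum_congr rfl fun i hi => by rw [hsd i hi]
  have hcard : ∑ i ∈ Finset.Icc 2 (a - 1), d i = card s := by
    rw [← sum_count_eq_card hs]
    exact Finset.sum_congr rfl fun i hi => by rw [hsd i hi]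
  rw [hvalue] at hd ⊢
  obtain ⟨t, ht, hst, hts⟩ := extractsFib (by omega) (fun i hi => ((hIcc i).mp (hs i hi)).2) hd
  obtain ⟨t', ht', htt', hcard'⟩ := exists_fibSum_eq_of_two_le ha ht
  have ht'S : ∀ i ∈ t', i ∈ Finset.Icc 2 (a - 1) := fun i hi => (hIcc i).mpr (ht' i hi)
  refine ⟨fun i => t'.count i, ?_, ?_⟩
  · rw [sum_count_mul_fib ht'S, htt', hst]
  · rw [sum_count_eq_card ht'S, hcard]
    omega
end

section
/- Let a ≥ 3, let β(x) denote the minimal number of summands in a representation of x as a sum of Fibonacci numbers f_i with i ≥ 2 (repetitions allowed), and let S(a) be the numerical semigroup generated by {f_a + f_n : n ∈ ℕ}. Then for every x ∈ {0, 1, ..., f_a − 1}, the least element of S(a) congruent to x modulo f_a is β(x)·f_a + x. Equivalently, the Apéry set Ap(S(a), f_a) equals {β(x)·f_a + x : 0 ≤ x ≤ f_a − 1}. -/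
noncomputable def beta (x : ℕ) : ℕ :=
  sInf {k : ℕ | ∃ M : Multiset ℕ,
    (∀ i ∈ M, 2 ≤ i) ∧ (M.map Nat.fib).sum = x ∧ M.card = k}

/-! With `F = fib a`, the elements of `S a` are the numbers `k * F + x` with `x` a sum of `k`
Fibonacci numbers, so `beta x * F + x ∈ S a`. Conversely the set of `s` with
`beta (s % F) ≤ s / F` is an additive submonoid containing the generators. For addition, when two
remainders overflow `F`, their joint representation uses only indices below `a` and can give up a
copy of `F = fib (a - 1) + fib (a - 2)` while losing a summand. For a generator `F + fib n` with
`n ≥ a`, the identity `fib (p + a) = fib p * fib (a - 1) + fib (p + 1) * F` rewrites it through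
the generators `F + fib (a - 1)` and `F`. -/

section

open Multiset
open Nat (fib)

lemma beta_le_card {x : ℕ} (M : Multiset ℕ) (hM : ∀ i ∈ M, 2 ≤ i)
    (hx : (M.map fib).sum = x) : beta x ≤ card M :=
  Nat.sInf_le ⟨M, hM, hx, rfl⟩

lemma exists_card_eq_beta (x : ℕ) :
    ∃ M : Multiset ℕ, (∀ i ∈ M, 2 ≤ i) ∧ (M.map fib).sum = x ∧ card M = beta x :=
  Nat.sInf_mem
    (s := {k | ∃ M : Multiset ℕ, (∀ i ∈ M, 2 ≤ i) ∧ (M.map fib).sum = x ∧ card M = k})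
    ⟨x, replicate x 2, fun _ hi => (eq_of_mem_replicate hi).ge, by simp, by simp⟩

lemma beta_zero : beta 0 = 0 :=
  Nat.le_zero.1 (beta_le_card 0 (by simp) (by simp))

lemma beta_add_le (x y : ℕ) : beta (x + y) ≤ beta x + beta y := by
  obtain ⟨M, hM, rfl, hMx⟩ := exists_card_eq_beta x
  obtain ⟨N, hN, rfl, hNy⟩ := exists_card_eq_beta y
  rw [← hMx, ← hNy, ← card_add, ← sum_add, ← map_add]
  exact beta_le_card _ (fun i hi => (mem_add.1 hi).elim (hM i) (hN i)) rfl

lemma beta_fib_le_one (n : ℕ) : beta (fib n) ≤ 1 := by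
  rcases n with _ | _ | n
  · simp [beta_zero]
  · exact beta_le_card {2} (by simp) (by simp)
  · exact beta_le_card {n + 2} (by simp) (by simp)

lemma beta_sum_map_fib_le_card (M : Multiset ℕ) : beta (M.map fib).sum ≤ card M := by
  induction M using Multiset.induction_on with
  | empty => simp [beta_zero]
  | cons i M ih =>
    rw [map_cons, sum_cons, card_cons, add_comm (card M)]
    exact (beta_add_le _ _).trans (Nat.add_le_add (beta_fib_le_one i) ih)

/- Split off `fib (a - 1)` first; if the rest still contains `fib (a - 1)`, use
`2 fib (a - 1) = fib a + fib (a - 3)`, otherwise split off `fib (a - 2)` as well. -/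
lemma exists_card_lt_of_fib_le_sum_map_fib {a : ℕ} (ha : a ≠ 0) {M : Multiset ℕ}
    (hM : ∀ i ∈ M, i ≤ a) (hsum : fib a ≤ (M.map fib).sum) :
    ∃ M' : Multiset ℕ, (∀ i ∈ M', i ≤ a) ∧
      fib a + (M'.map fib).sum = (M.map fib).sum ∧ card M' < card M := by
  induction a using Nat.strong_induction_on generalizing M with
  | _ a ih =>
  have erase_of_fib_eq : ∀ i ∈ M, fib i = fib a →
      ∃ M' : Multiset ℕ, (∀ i ∈ M', i ≤ a) ∧
        fib a + (M'.map fib).sum = (M.map fib).sum ∧ card M' < card M := fun i hi hfi =>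
    ⟨M.erase i, fun j hj => hM j (mem_of_mem_erase hj), hfi ▸ sum_map_erase hi,
      card_erase_lt_of_mem hi⟩
  by_cases haM : a ∈ M
  · exact erase_of_fib_eq a haM rfl
  obtain ⟨c, rfl⟩ | hsmall : (∃ c, a = c + 3) ∨ a ≤ 2 :=
    (le_or_gt 3 a).imp (fun h => ⟨a - 3, by omega⟩) (by omega)
  · have hfib₂ : fib (c + 2) = fib c + fib (c + 1) := Nat.fib_add_two
    have hfib₃ : fib (c + 3) = fib (c + 1) + fib (c + 2) := Nat.fib_add_two
    obtain ⟨M₁, hM₁, hsum₁, hcard₁⟩ := ih (c + 2) (by omega) (by omega)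
      (fun i hi => Nat.le_of_lt_succ (lt_of_le_of_ne (hM i hi) (ne_of_mem_of_not_mem hi haM)))
      (by omega)
    by_cases hc : c + 2 ∈ M₁
    · refine ⟨c ::ₘ M₁.erase (c + 2), ?_, ?_, ?_⟩
      · simp only [mem_cons]
        rintro i (rfl | hi)
        · omega
        · exact (hM₁ i (mem_of_mem_erase hi)).trans (by omega)
      · have := sum_map_erase (f := fib) hc
        simp only [map_cons, sum_cons]
        omega
      · simpa [card_erase_of_mem hc, Nat.sub_add_cancel (card_pos_iff_exists_mem.2 ⟨_, hc⟩)]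
    · obtain ⟨M₂, hM₂, hsum₂, hcard₂⟩ := ih (c + 1) (by omega) (by omega) (M := M₁)
        (fun i hi => Nat.le_of_lt_succ (lt_of_le_of_ne (hM₁ i hi) (ne_of_mem_of_not_mem hi hc)))
        (by omega)
      exact ⟨M₂, fun i hi => (hM₂ i hi).trans (by omega), by omega, hcard₂.trans hcard₁⟩
  · obtain ⟨i, hi, hfi⟩ : ∃ i ∈ M, fib i ≠ 0 := by
      by_contra! h
      rw [sum_eq_zero (by simpa using h)] at hsum
      exact Nat.fib_pos.2 (Nat.pos_of_ne_zero ha) |>.ne' (Nat.le_zero.1 hsum)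
    have := hM i hi
    refine erase_of_fib_eq i hi ?_
    interval_cases a <;> interval_cases i <;> simp_all

lemma beta_add_sub_fib_le {a x y : ℕ} (hx : x < fib a) (hy : y < fib a) (hxy : fib a ≤ x + y) :
    beta (x + y - fib a) ≤ beta x + beta y := by
  obtain ⟨M, -, rfl, hMx⟩ := exists_card_eq_beta x
  obtain ⟨N, -, rfl, hNy⟩ := exists_card_eq_beta y
  have small : ∀ i ∈ M + N, i ≤ a := by
    intro i hi
    refine (Nat.fib_mono.reflect_lt ?_).le
    rcases mem_add.1 hi with hi | hi
    · exact (le_sum_of_mem (mem_map_of_mem fib hi)).trans_lt hx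
    · exact (le_sum_of_mem (mem_map_of_mem fib hi)).trans_lt hy
  obtain ⟨M', -, hsum, hcard⟩ := exists_card_lt_of_fib_le_sum_map_fib
    (by rintro rfl; simp at hx) small (by simpa using hxy)
  rw [map_add, sum_add] at hsum
  rw [← hsum, Nat.add_sub_cancel_left, ← hMx, ← hNy, ← card_add]
  exact (beta_sum_map_fib_le_card M').trans hcard.le

lemma beta_mul_add_mod_le_div_iff {F q r : ℕ} (hr : r < F) :
    beta ((q * F + r) % F) ≤ (q * F + r) / F ↔ beta r ≤ q := by
  rw [Nat.add_comm, Nat.add_mul_mod_self_right, Nat.mod_eq_of_lt hr,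
    Nat.add_mul_div_right _ _ (hr.trans_le' (Nat.zero_le _)), Nat.div_eq_of_lt hr, zero_add]

/- `s ≥ beta x * fib a + x` for `x = s % fib a`; for `3 ≤ a` this submonoid turns out to be
`S a`. -/
def betaLeDiv (a : ℕ) (ha : a ≠ 0) : AddSubmonoid ℕ where
  carrier := {s | beta (s % fib a) ≤ s / fib a}
  zero_mem' := by simp [beta_zero]
  add_mem' {s t} hs ht := by
    have hF : 0 < fib a := Nat.fib_pos.2 (Nat.pos_of_ne_zero ha)
    obtain ⟨q₁, r₁, hr₁, rfl⟩ : ∃ q r, r < fib a ∧ q * fib a + r = s :=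
      ⟨_, _, Nat.mod_lt s hF, Nat.div_add_mod' s _⟩
    obtain ⟨q₂, r₂, hr₂, rfl⟩ : ∃ q r, r < fib a ∧ q * fib a + r = t :=
      ⟨_, _, Nat.mod_lt t hF, Nat.div_add_mod' t _⟩
    simp only [Set.mem_ofPred_eq, beta_mul_add_mod_le_div_iff hr₁,
      beta_mul_add_mod_le_div_iff hr₂] at hs ht ⊢
    rcases lt_or_ge (r₁ + r₂) (fib a) with hlt | hge
    · rw [show q₁ * fib a + r₁ + (q₂ * fib a + r₂) = (q₁ + q₂) * fib a + (r₁ + r₂) by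
          ring,
        beta_mul_add_mod_le_div_iff hlt]
      exact (beta_add_le _ _).trans (add_le_add hs ht)
    · obtain ⟨d, hd⟩ := Nat.exists_eq_add_of_le hge
      rw [show q₁ * fib a + r₁ + (q₂ * fib a + r₂) = (q₁ + q₂ + 1) * fib a + d by
          simp only [add_mul, one_mul]; omega,
        beta_mul_add_mod_le_div_iff (by omega)]
      have := beta_add_sub_fib_le hr₁ hr₂ hge
      rw [hd, Nat.add_sub_cancel_left] at this
      omega

lemma mul_fib_add_mem_betaLeDiv_iff {a q r : ℕ} (ha : a ≠ 0) (hr : r < fib a) :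
    q * fib a + r ∈ betaLeDiv a ha ↔ beta r ≤ q :=
  beta_mul_add_mod_le_div_iff hr

lemma fib_add_fib_mem_betaLeDiv {a : ℕ} (ha : 3 ≤ a) (n : ℕ) :
    fib a + fib n ∈ betaLeDiv a (by omega) := by
  have of_lt : ∀ n < a, fib a + fib n ∈ betaLeDiv a (by omega) := by
    intro n hn
    have hfib : fib n < fib a := by
      rcases le_or_gt 2 n with h | h
      · exact (Nat.fib_lt_fib h).2 hn
      · calc fib n ≤ fib 1 := Nat.fib_mono (by omega)
          _ < fib 3 := by decide
          _ ≤ fib a := Nat.fib_mono ha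
    simpa using (mul_fib_add_mem_betaLeDiv_iff (q := 1) (by omega) hfib).2 (beta_fib_le_one n)
  rcases lt_or_ge n a with hn | hn
  · exact of_lt n hn
  obtain ⟨c, rfl⟩ : ∃ c, a = c + 1 := ⟨a - 1, by omega⟩
  obtain ⟨p, rfl⟩ : ∃ p, n = p + c + 1 := ⟨n - c - 1, by omega⟩
  obtain ⟨d, hd⟩ := Nat.exists_eq_add_of_le (Nat.fib_le_fib_succ (n := p))
  have hsplit : fib (c + 1) + fib (p + c + 1) =
      fib p • (fib (c + 1) + fib c) + (d + 1) • (fib (c + 1) + fib 0) := by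
    rw [Nat.fib_add, hd, Nat.fib_zero, smul_eq_mul, smul_eq_mul]
    ring
  rw [hsplit]
  exact add_mem (nsmul_mem (of_lt c (by omega)) _) (nsmul_mem (of_lt 0 (by omega)) _)

lemma S_le_betaLeDiv {a : ℕ} (ha : 3 ≤ a) : S a ≤ betaLeDiv a (by omega) :=
  AddSubmonoid.closure_le.2 (by rintro _ ⟨n, rfl⟩; exact fib_add_fib_mem_betaLeDiv ha n)

lemma card_mul_fib_add_sum_map_fib_mem_S (a : ℕ) (M : Multiset ℕ) :
    card M * fib a + (M.map fib).sum ∈ S a := by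
  induction M using Multiset.induction_on with
  | empty => simp [zero_mem]
  | cons i M ih =>
    rw [card_cons, map_cons, sum_cons,
      show (card M + 1) * fib a + (fib i + (M.map fib).sum) =
        (fib a + fib i) + (card M * fib a + (M.map fib).sum) by ring]
    exact add_mem (AddSubmonoid.subset_closure ⟨i, rfl⟩) ih

lemma mul_fib_add_mem_S {a x q : ℕ} (h : beta x ≤ q) : q * fib a + x ∈ S a := by
  obtain ⟨M, -, hMx, hM⟩ := exists_card_eq_beta x
  -- pad with copies of the generator `fib a + fib 0 = fib a`
  have := card_mul_fib_add_sum_map_fib_mem_S a (M + replicate (q - beta x) 0)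
  rwa [card_add, card_replicate, hM, Nat.add_sub_cancel' h, map_add, sum_add, hMx,
    map_replicate, Nat.fib_zero, sum_replicate, smul_zero, add_zero] at this

end

theorem apery_S (a : ℕ) (ha : 3 ≤ a) :
    (∀ x < Nat.fib a,
      IsLeast {s : ℕ | s ∈ S a ∧ s % Nat.fib a = x} (beta x * Nat.fib a + x)) ∧
    {s : ℕ | s ∈ S a ∧ ∀ t : ℕ, t + Nat.fib a = s → t ∉ S a} =
      (fun x => beta x * Nat.fib a + x) '' Set.Iio (Nat.fib a) := by
  have hF : 0 < Nat.fib a := Nat.fib_pos.2 (by omega)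
  have isLeast : ∀ x < Nat.fib a,
      IsLeast {s : ℕ | s ∈ S a ∧ s % Nat.fib a = x} (beta x * Nat.fib a + x) := by
    refine fun x hx => ⟨⟨mul_fib_add_mem_S le_rfl, Nat.mul_add_mod_of_lt hx⟩, ?_⟩
    rintro s ⟨hs, rfl⟩
    calc beta (s % Nat.fib a) * Nat.fib a + s % Nat.fib a
        ≤ s / Nat.fib a * Nat.fib a + s % Nat.fib a := by gcongr; exact S_le_betaLeDiv ha hs
      _ = s := Nat.div_add_mod' s _
  refine ⟨isLeast, Set.ext fun s => ⟨?_, ?_⟩⟩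
  · rintro ⟨hs, hmin⟩
    refine ⟨s % Nat.fib a, Nat.mod_lt s hF, ?_⟩
    have hle : beta (s % Nat.fib a) ≤ s / Nat.fib a := S_le_betaLeDiv ha hs
    suffices s / Nat.fib a = beta (s % Nat.fib a) by
      simp only [← this, Nat.div_add_mod']
    by_contra hne
    have hF_le : Nat.fib a ≤ s / Nat.fib a * Nat.fib a := Nat.le_mul_of_pos_left _ (by omega)
    refine hmin ((s / Nat.fib a - 1) * Nat.fib a + s % Nat.fib a) ?_ (mul_fib_add_mem_S (by omega))
    rw [Nat.sub_one_mul]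
    have := Nat.div_add_mod' s (Nat.fib a)
    omega
  · rintro ⟨x, hx, rfl⟩
    refine ⟨(isLeast x hx).1.1, fun t hts ht => ?_⟩
    beta_reduce at hts
    have := (isLeast x hx).2 ⟨ht, by rw [← Nat.add_mod_right, hts, Nat.mul_add_mod_of_lt hx]⟩
    omega
end

section
/- If x is a positive natural number with Zeckendorf decomposition x = Σ_{i=2}^{k} b_i·f_i (b_i ∈ {0,1}, b_k = 1, b_i·b_{i+1} = 0), then β(x) = Σ_{i=2}^{k} b_i; that is, the Zeckendorf representation achieves the minimum number of Fibonacci summands among all representations of x as nonnegative-integer combinations of f_2, f_3, .... -/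
namespace Nat

lemma zeckendorf_fib_add {n y : ℕ} (hy : y < fib (n + 1)) :
    zeckendorf (fib (n + 2) + y) = (n + 2) :: zeckendorf y := by
  have hrep : ((n + 2) :: zeckendorf y).IsZeckendorfRep := by
    rw [List.IsZeckendorfRep, List.cons_append]
    refine (isZeckendorfRep_zeckendorf y).cons fun a ha => ?_
    rcases y.eq_zero_or_pos with rfl | hy0
    · simp only [zeckendorf_zero, List.nil_append, List.head?_cons, Option.mem_some_iff] at ha
      omega
    · simp only [zeckendorf_of_pos hy0, List.cons_append, List.head?_cons,
        Option.mem_some_iff] at ha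
      have : a < n + 1 := ha ▸ greatestFib_lt.2 hy
      omega
  simpa using zeckendorf_sum_fib hrep

lemma length_zeckendorf_fib_add {n y : ℕ} (hy : y < fib (n + 1)) :
    (zeckendorf (fib (n + 2) + y)).length = (zeckendorf y).length + 1 := by
  rw [zeckendorf_fib_add hy, List.length_cons]

lemma exists_eq_fib_add {x : ℕ} (hx : 0 < x) :
    ∃ n y, y < fib (n + 1) ∧ x = fib (n + 2) + y := by
  have h2 : 2 ≤ greatestFib x := le_greatestFib.2 (by rwa [fib_two])
  obtain ⟨n, hn⟩ : ∃ n, greatestFib x = n + 2 := ⟨_, (Nat.sub_add_cancel h2).symm⟩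
  have hle := fib_greatestFib_le x
  have hlt := lt_fib_greatestFib_add_one x
  have hfib : fib (n + 2 + 1) = fib (n + 1) + fib (n + 2) := fib_add_two
  rw [hn] at hle hlt
  exact ⟨n, x - fib (n + 2), by omega, by omega⟩

lemma two_le_of_mem_zeckendorf {x i : ℕ} (hi : i ∈ zeckendorf x) : 2 ≤ i := by
  induction x using Nat.strong_induction_on with
  | _ x ih =>
  rcases x.eq_zero_or_pos with rfl | hx
  · simp at hi
  rw [zeckendorf_of_pos hx, List.mem_cons] at hi
  rcases hi with rfl | hi
  · exact le_greatestFib.2 (by rwa [fib_two])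
  · exact ih _ (Nat.sub_lt hx (fib_pos.2 (greatestFib_pos.2 hx))) hi

lemma zeckendorf_sum_fib_eq_sort {s : Finset ℕ} (h2 : ∀ i ∈ s, 2 ≤ i)
    (hs : ∀ i ∈ s, i + 1 ∉ s) :
    zeckendorf (∑ i ∈ s, fib i) = s.sort (· ≥ ·) := by
  have hrep : (s.sort (· ≥ ·)).IsZeckendorfRep := by
    refine List.Pairwise.isChain (List.pairwise_append.2 ⟨?_, by simp, ?_⟩)
    · refine (s.sortedGT_sort.pairwise).imp_of_mem fun {a b} ha hb hab => ?_
      rw [Finset.mem_sort] at ha hb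
      have : a ≠ b + 1 := fun h => hs b hb (h ▸ ha)
      omega
    · simpa using fun a ha => h2 a ((Finset.mem_sort (· ≥ ·)).1 ha)
  rw [← zeckendorf_sum_fib hrep, Finset.sum_eq_multiset_sum, ← Finset.sort_eq s (· ≥ ·)]
  rfl

lemma two_mul_fib_add_two (n : ℕ) : 2 * fib (n + 2) = fib (n + 3) + fib n := by
  rw [fib_add_two (n := n + 1), fib_add_two (n := n)]
  ring

lemma length_zeckendorf_add_fib_le (x m : ℕ) :
    (zeckendorf (x + fib m)).length ≤ (zeckendorf x).length + 1 := by
  induction x using Nat.strong_induction_on generalizing m with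
  | _ x ih =>
  suffices h : ∀ k, (zeckendorf (x + fib (k + 2))).length ≤ (zeckendorf x).length + 1 by
    rcases m with _ | _ | k
    · simp
    · simpa using h 0
    · exact h k
  intro k
  rcases x.eq_zero_or_pos with rfl | hx
  · rw [zero_add, ← add_zero (fib (k + 2)), length_zeckendorf_fib_add (fib_pos.2 k.succ_pos)]
  obtain ⟨n, y, hy, rfl⟩ := exists_eq_fib_add hx
  have hyx : y < fib (n + 2) + y := Nat.lt_add_of_pos_left (fib_pos.2 (by omega))
  rw [length_zeckendorf_fib_add hy]
  obtain hkn | rfl | rfl | hnk : k < n ∨ k = n ∨ k = n + 1 ∨ n + 2 ≤ k := by omega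
  · have hw : y + fib (k + 2) < fib (n + 2) + y := by
      have := (fib_lt_fib le_add_self).2 (by omega : k + 2 < n + 2)
      omega
    calc (zeckendorf (fib (n + 2) + y + fib (k + 2))).length
        = (zeckendorf (y + fib (k + 2) + fib (n + 2))).length := by ring_nf
      _ ≤ (zeckendorf (y + fib (k + 2))).length + 1 := ih _ hw _
      _ ≤ (zeckendorf y).length + 1 + 1 := by grw [ih y hyx]
  · have hsplit : fib (k + 2) + y + fib (k + 2) = fib (k + 3) + (y + fib k) := by
      have := two_mul_fib_add_two k
      omega
    have hlt : y + fib k < fib (k + 2) := by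
      rw [fib_add_two]
      omega
    rw [hsplit, length_zeckendorf_fib_add hlt]
    grw [ih y hyx]
  · have hsplit : fib (n + 2) + y + fib (n + 3) = fib (n + 4) + y := by
      rw [fib_add_two (n := n + 2)]
      ring
    have hlt : y < fib (n + 3) := hy.trans_le (fib_mono (by omega))
    rw [hsplit, length_zeckendorf_fib_add hlt]
    omega
  · have hlt : fib (n + 2) + y < fib (k + 1) := by
      have : fib (n + 3) = fib (n + 1) + fib (n + 2) := fib_add_two
      have := fib_mono (show n + 3 ≤ k + 1 by omega)
      omega
    rw [add_comm, length_zeckendorf_fib_add hlt, length_zeckendorf_fib_add hy]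

lemma length_zeckendorf_sum_fib_le (M : Multiset ℕ) :
    (zeckendorf (M.map fib).sum).length ≤ Multiset.card M := by
  induction M using Multiset.induction_on with
  | empty => simp
  | cons a M ih =>
    rw [Multiset.map_cons, Multiset.sum_cons, add_comm, Multiset.card_cons]
    exact (length_zeckendorf_add_fib_le _ a).trans (by omega)

end Nat

lemma Finset.sum_mul_eq_sum_filter {ι : Type*} {s : Finset ι} {b : ι → ℕ} (hb : ∀ i, b i ≤ 1)
    (f : ι → ℕ) : ∑ i ∈ s, b i * f i = ∑ i ∈ s with b i = 1, f i := by
  rw [Finset.sum_filter]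
  refine Finset.sum_congr rfl fun i _ => ?_
  rcases Nat.le_one_iff_eq_zero_or_eq_one.1 (hb i) with h | h <;> simp [h]

theorem beta_eq_length_zeckendorf (x : ℕ) : beta x = (Nat.zeckendorf x).length := by
  have hmem : (Nat.zeckendorf x).length ∈ {k : ℕ | ∃ M : Multiset ℕ,
      (∀ i ∈ M, 2 ≤ i) ∧ (M.map Nat.fib).sum = x ∧ M.card = k} :=
    ⟨Nat.zeckendorf x, fun _ => Nat.two_le_of_mem_zeckendorf, by simp, by simp⟩
  refine le_antisymm (Nat.sInf_le hmem) (le_csInf ⟨_, hmem⟩ ?_)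
  rintro _ ⟨M, -, rfl, rfl⟩
  exact Nat.length_zeckendorf_sum_fib_le M

theorem zeckendorf_is_minimal_general (x k : ℕ) (b : ℕ → ℕ)
    (hb01 : ∀ i, b i ≤ 1) (hcons : ∀ i, b i * b (i + 1) = 0)
    (hsum : x = ∑ i ∈ Finset.Icc 2 k, b i * Nat.fib i) :
    beta x = ∑ i ∈ Finset.Icc 2 k, b i := by
  set S := {i ∈ Finset.Icc 2 k | b i = 1}
  have h2 : ∀ i ∈ S, 2 ≤ i := fun i hi => (Finset.mem_Icc.1 (Finset.mem_filter.1 hi).1).1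
  have hS : ∀ i ∈ S, i + 1 ∉ S := fun i hi hi1 => by
    simpa [(Finset.mem_filter.1 hi).2, (Finset.mem_filter.1 hi1).2] using hcons i
  have hcard : ∑ i ∈ Finset.Icc 2 k, b i = S.card := by
    rw [Finset.card_eq_sum_ones, ← Finset.sum_mul_eq_sum_filter hb01]
    simp only [mul_one]
  rw [beta_eq_length_zeckendorf, hsum, Finset.sum_mul_eq_sum_filter hb01,
    Nat.zeckendorf_sum_fib_eq_sort h2 hS, Finset.length_sort, hcard]

theorem zeckendorf_is_minimal (x k : ℕ) (hx : 0 < x) (hk : 2 ≤ k) (b : ℕ → ℕ)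
    (hb01 : ∀ i, b i ≤ 1) (hbk : b k = 1) (hcons : ∀ i, b i * b (i + 1) = 0)
    (hsum : x = ∑ i ∈ Finset.Icc 2 k, b i * Nat.fib i) :
    beta x = ∑ i ∈ Finset.Icc 2 k, b i :=
  zeckendorf_is_minimal_general x k b hb01 hcons hsum
end

section
/- For every positive natural number x, γ(x − f_{γ(x)}) ≤ γ(x) − 2, where γ(x) = max{ l : f_l ≤ x }. -/
noncomputable def gamma (x : ℕ) : ℕ := sSup {l : ℕ | Nat.fib l ≤ x}

lemma gamma_eq_greatestFib : gamma = Nat.greatestFib :=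
  funext fun x => IsGreatest.csSup_eq
    ⟨Nat.fib_greatestFib_le x, fun _ => Nat.le_greatestFib.mpr⟩

theorem gamma_drop (x : ℕ) (hx : 0 < x) :
    gamma (x - Nat.fib (gamma x)) ≤ gamma x - 2 := by
  rw [gamma_eq_greatestFib]
  exact Nat.greatestFib_sub_fib_greatestFib_le_greatestFib hx.ne'
end

section
/- For a ≥ 2, the Frobenius number of S(a) (the largest natural number not in S(a)) equals ⌊(a−1)/2⌋·f_a − 1. -/
open Nat Multiset

namespace FibonacciSemigroup

lemma fib_eq_fib_sub_two_add_fib_sub_one {a : ℕ} (ha : 2 ≤ a) :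
    fib a = fib (a - 2) + fib (a - 1) := by
  obtain ⟨c, rfl⟩ : ∃ c, a = c + 2 := ⟨a - 2, by omega⟩
  simp [fib_add_two]

lemma fib_add_eq {a : ℕ} (ha : 0 < a) (k : ℕ) :
    fib (a + k) = fib k * fib (a - 1) + fib (k + 1) * fib a := by
  have := fib_add k (a - 1)
  rwa [Nat.sub_add_cancel ha, show k + (a - 1) + 1 = a + k by omega] at this

def fibSum (m : Multiset ℕ) : ℕ := (m.map fib).sum

def weight (m : Multiset ℕ) : ℕ := (m.map (· + 2)).sum

@[simp] lemma fibSum_zero : fibSum 0 = 0 := rfl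

@[simp] lemma fibSum_cons (i : ℕ) (m : Multiset ℕ) : fibSum (i ::ₘ m) = fib i + fibSum m := by
  simp [fibSum]

@[simp] lemma fibSum_singleton (i : ℕ) : fibSum {i} = fib i := by
  simp [fibSum]

@[simp] lemma fibSum_add (m m' : Multiset ℕ) : fibSum (m + m') = fibSum m + fibSum m' := by
  simp [fibSum]

@[simp] lemma fibSum_replicate (n i : ℕ) : fibSum (replicate n i) = n * fib i := by
  simp [fibSum]

@[simp] lemma weight_cons (i : ℕ) (m : Multiset ℕ) : weight (i ::ₘ m) = i + 2 + weight m := by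
  simp [weight]

@[simp] lemma weight_add (m m' : Multiset ℕ) : weight (m + m') = weight m + weight m' := by
  simp [weight]

lemma forall_lt_sub_one_of_notMem {b : ℕ} {m : Multiset ℕ} (hlt : ∀ i ∈ m, i < b)
    (htop : b - 1 ∉ m) : ∀ i ∈ m, i < b - 1 := fun i hi =>
  lt_of_le_of_ne (Nat.le_sub_one_of_lt (hlt i hi)) fun h => htop (h ▸ hi)

/-- The Zeckendorf normal form; since `fib 1 = fib 2`, the indices `1` and `3` count as
consecutive. -/
def Sparse (m : Multiset ℕ) : Prop :=
  0 ∉ m ∧ m.Nodup ∧ (∀ x ∈ m, x + 1 ∉ m) ∧ ¬(1 ∈ m ∧ 3 ∈ m)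

lemma Sparse.of_cons {i : ℕ} {m : Multiset ℕ} (h : Sparse (i ::ₘ m)) : Sparse m := by
  obtain ⟨h0, hnd, hc, h13⟩ := h
  have hsub : m ⊆ i ::ₘ m := subset_cons m i
  exact ⟨fun h => h0 (hsub h), hnd.of_cons, fun x hx hx1 => hc x (hsub hx) (hsub hx1),
    fun h => h13 ⟨hsub h.1, hsub h.2⟩⟩

lemma Sparse.fibSum_lt {b : ℕ} {m : Multiset ℕ} (hm : Sparse m) (hb : 3 ≤ b)
    (hlt : ∀ i ∈ m, i < b) : fibSum m < fib b := by
  induction b using Nat.strong_induction_on generalizing m with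
  | _ b ih =>
  obtain ⟨h0, hnd, hc, h13⟩ := id hm
  by_cases htop : b - 1 ∈ m
  · obtain ⟨r, rfl⟩ := exists_cons_of_mem htop
    have hr_lt : ∀ i ∈ r, i < b - 2 := by
      intro i hi
      have : i ≠ b - 1 := fun h => (nodup_cons.1 hnd).1 (h ▸ hi)
      have : i + 1 ≠ b - 1 := fun h => hc i (mem_cons_of_mem hi) (h ▸ mem_cons_self _ _)
      have := hlt i (mem_cons_of_mem hi)
      omega
    have hr : fibSum r < fib (b - 2) := by
      rcases lt_or_ge b 5 with hb5 | hb5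
      · suffices r = 0 by simpa [this] using fib_pos.2 (by omega : 0 < b - 2)
        refine eq_zero_of_forall_notMem fun i hi => h13 ?_
        have : i ≠ 0 := fun h => h0 (mem_cons_of_mem (h ▸ hi))
        obtain ⟨rfl, rfl⟩ : i = 1 ∧ b = 4 := by have := hr_lt i hi; omega
        exact ⟨mem_cons_of_mem hi, mem_cons_self _ _⟩
      · exact ih (b - 2) (by omega) hm.of_cons (by omega) hr_lt
    rw [fibSum_cons, fib_eq_fib_sub_two_add_fib_sub_one (a := b) (by omega)]
    omega
  · have hlt' : ∀ i ∈ m, i < b - 1 := fun i hi =>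
      lt_of_le_of_ne (Nat.le_sub_one_of_lt (hlt i hi)) (fun h => htop (h ▸ hi))
    rcases lt_or_ge b 4 with hb4 | hb4
    · have : m ≤ {1} := (le_iff_subset hnd).2 fun i hi => by
        have := hlt' i hi
        have : i ≠ 0 := fun h => h0 (h ▸ hi)
        rw [mem_singleton]
        omega
      obtain rfl : b = 3 := by omega
      obtain rfl | rfl := le_singleton.1 this <;> decide
    · exact (ih (b - 1) (by omega) hm (by omega) hlt').trans_le (fib_mono (by omega))

lemma Sparse.eq_one_and_mem {a s : ℕ} {m : Multiset ℕ} (hm : Sparse m) (ha : 4 ≤ a)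
    (hlt : ∀ i ∈ m, i < a) (h : fibSum m + 1 = s * fib a) : s = 1 ∧ a - 1 ∈ m := by
  have hsum := hm.fibSum_lt (by omega) hlt
  obtain rfl : s = 1 := by
    have hs : s ≠ 0 := by rintro rfl; simp at h
    have : s ≤ 1 := Nat.le_of_mul_le_mul_right (by omega : s * fib a ≤ 1 * fib a)
      (fib_pos.2 (by omega))
    omega
  refine ⟨rfl, by_contra fun htop => ?_⟩
  have := hm.fibSum_lt (by omega) (forall_lt_sub_one_of_notMem hlt htop)
  have := fib_lt_fib_succ (n := a - 1) (by omega)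
  rw [Nat.sub_add_cancel (by omega)] at this
  omega

lemma exists_carry_of_not_sparse {m : Multiset ℕ} (hm : ¬Sparse m) :
    ∃ u v, u ≤ m ∧ fibSum v = fibSum u ∧ card v ≤ card u ∧ weight v < weight u := by
  have pair_le {x y : ℕ} (hxy : x ≠ y) (hx : x ∈ m) (hy : y ∈ m) : {x, y} ≤ m :=
    (cons_le_of_notMem (by simpa using hxy)).2 ⟨hx, singleton_le.2 hy⟩
  rw [Sparse, not_and_or, not_and_or, not_and_or, not_not, not_not, nodup_iff_count_le_one] at hm
  push Not at hm
  rcases hm with h0 | ⟨x, hx⟩ | ⟨x, hx, hx1⟩ | ⟨h1, h3⟩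
  · exact ⟨{0}, 0, singleton_le.2 h0, by simp, by simp, by simp [weight]⟩
  · have hle : replicate 2 x ≤ m := le_count_iff_replicate_le.1 hx
    rcases x with _ | _ | x
    · exact ⟨replicate 2 0, 0, hle, by simp, by simp, by simp [weight]⟩
    · exact ⟨replicate 2 1, {3}, hle, by simp; decide, by simp, by simp [weight]⟩
    · refine ⟨replicate 2 (x + 2), {x + 3, x}, hle, ?_, by simp, by simp [weight]; omega⟩
      simp [fib_add_two]
      ring
  · exact ⟨{x, x + 1}, {x + 2}, pair_le (by omega) hx hx1, by simp [fib_add_two], by simp,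
      by simp [weight]⟩
  · exact ⟨{1, 3}, {4}, pair_le (by omega) h1 h3, by simp; decide, by simp, by simp [weight]⟩

lemma exists_trade_of_le_mem {a s n : ℕ} {m : Multiset ℕ} (hn : n ∈ m) (han : a ≤ n)
    (h : fibSum m + 1 = s * fib a) :
    ∃ m' s', s' < s ∧ card m' + s' ≤ card m + s ∧ fibSum m' + 1 = s' * fib a := by
  obtain ⟨r, rfl⟩ := exists_cons_of_mem hn
  obtain ⟨k, rfl⟩ := Nat.exists_eq_add_of_le han
  have ha : 0 < a := Nat.pos_of_ne_zero (by rintro rfl; simp at h)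
  rw [fibSum_cons, fib_add_eq ha] at h
  have hk : fib (k + 1) < s := by
    by_contra! hk
    nlinarith [Nat.mul_le_mul_right (fib a) hk]
  have := fib_pos.2 (by omega : 0 < k + 1)
  have := fib_le_fib_succ (n := k)
  refine ⟨replicate (fib k) (a - 1) + r, s - fib (k + 1), by omega, ?_, ?_⟩
  · simp only [card_add, card_replicate, card_cons]
    omega
  · simp [Nat.sub_mul]
    omega

theorem sub_one_div_two_lt_card_add {a s : ℕ} {m : Multiset ℕ}
    (h : fibSum m + 1 = s * fib a) : (a - 1) / 2 < card m + s := by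
  induction s using Nat.strong_induction_on generalizing a m with
  | _ s ihs =>
  induction hw : weight m using Nat.strong_induction_on generalizing a m with
  | _ w ihw =>
  subst hw
  have hs : 0 < s := Nat.pos_of_ne_zero (by rintro rfl; simp at h)
  rcases le_or_gt a 3 with ha | ha
  · have : 1 ≤ card m ∨ a ≤ 2 := by
      by_contra! hc
      obtain rfl : m = 0 := card_eq_zero.1 (by omega)
      obtain rfl : a = 3 := by omega
      simp [fib] at h
      omega
    omega
  by_cases hbig : ∃ n ∈ m, a ≤ n
  · obtain ⟨n, hn, han⟩ := hbig
    obtain ⟨m', s', hs', hcard, h'⟩ := exists_trade_of_le_mem hn han h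
    exact (ihs s' hs' h').trans_le hcard
  push Not at hbig
  by_cases hsp : Sparse m
  · obtain ⟨rfl, htop⟩ := hsp.eq_one_and_mem ha hbig h
    obtain ⟨r, rfl⟩ := exists_cons_of_mem htop
    rw [fibSum_cons, fib_eq_fib_sub_two_add_fib_sub_one (a := a) (by omega)] at h
    have := ihw (weight r) (by simp) (a := a - 2) (by omega) rfl
    simp only [card_cons]
    omega
  · obtain ⟨u, v, hu, hfib, hcard, hweight⟩ := exists_carry_of_not_sparse hsp
    obtain ⟨r, rfl⟩ := Multiset.le_iff_exists_add.1 hu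
    have := ihw (weight (v + r)) (by simp; omega)
      (show fibSum (v + r) + 1 = s * fib a by simp at h ⊢; omega) rfl
    simp only [card_add] at this ⊢
    omega

lemma mem_S_iff {a x : ℕ} : x ∈ S a ↔ ∃ m : Multiset ℕ, card m * fib a + fibSum m = x := by
  constructor
  · intro hx
    induction hx using AddSubmonoid.closure_induction with
    | mem x hx =>
      obtain ⟨n, rfl⟩ := hx
      exact ⟨{n}, by simp⟩
    | zero => exact ⟨0, by simp⟩
    | add x y _ _ hx hy =>
      obtain ⟨m, rfl⟩ := hx
      obtain ⟨m', rfl⟩ := hy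
      exact ⟨m + m', by simp; ring⟩
  · rintro ⟨m, rfl⟩
    induction m using Multiset.induction_on with
    | empty => simp
    | cons i m ih =>
      convert (S a).add_mem (AddSubmonoid.subset_closure ⟨i, rfl⟩) ih using 1
      simp
      ring

lemma exists_fibSum_eq_of_lt_fib {b r : ℕ} (hr : r < fib b) :
    ∃ m : Multiset ℕ, fibSum m = r ∧ card m ≤ (b - 1) / 2 := by
  induction b using Nat.strong_induction_on generalizing r with
  | _ b ih =>
  rcases le_or_gt b 2 with hb | hb
  · have : fib b ≤ 1 := by interval_cases b <;> decide
    exact ⟨0, by simp; omega, by simp⟩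
  rcases lt_or_ge r (fib (b - 1)) with hr' | hr'
  · obtain ⟨m, hm, hcard⟩ := ih (b - 1) (by omega) hr'
    exact ⟨m, hm, by omega⟩
  · have := fib_eq_fib_sub_two_add_fib_sub_one (a := b) (by omega)
    obtain ⟨m, hm, hcard⟩ := ih (b - 2) (by omega) (r := r - fib (b - 1)) (by omega)
    exact ⟨(b - 1) ::ₘ m, by simp; omega, by simp; omega⟩

lemma mem_S_of_le {a n : ℕ} (ha : 0 < a) (hn : (a - 1) / 2 * fib a ≤ n) : n ∈ S a := by
  have hF : 0 < fib a := fib_pos.2 ha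
  obtain ⟨m, hm, hcard⟩ := exists_fibSum_eq_of_lt_fib (Nat.mod_lt n hF)
  have hq : (a - 1) / 2 ≤ n / fib a := (Nat.le_div_iff_mul_le hF).2 hn
  refine mem_S_iff.2 ⟨m + replicate (n / fib a - card m) 0, ?_⟩
  rw [card_add, card_replicate, Nat.add_sub_cancel' (by omega), fibSum_add, hm]
  simp [Nat.div_add_mod']

lemma sub_one_notMem_S {a : ℕ} (ha : 3 ≤ a) : (a - 1) / 2 * fib a - 1 ∉ S a := by
  intro hmem
  obtain ⟨m, hm⟩ := mem_S_iff.1 hmem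
  have hqF : 0 < (a - 1) / 2 * fib a := Nat.mul_pos (by omega) (fib_pos.2 (by omega))
  have hcard : card m < (a - 1) / 2 := by
    by_contra! h
    have := Nat.mul_le_mul_right (fib a) h
    omega
  have := sub_one_div_two_lt_card_add (a := a) (s := (a - 1) / 2 - card m) (m := m) (by
    rw [Nat.sub_mul]
    omega)
  omega

end FibonacciSemigroup

open FibonacciSemigroup in
theorem frobenius_S (a : ℕ) (ha : 2 ≤ a) :
    sSup {n : ℕ | n ∉ S a} = ((a - 1) / 2) * Nat.fib a - 1 := by
  have hbound : ∀ n ∉ S a, n ≤ (a - 1) / 2 * fib a - 1 := fun n hn => by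
    by_contra! h
    exact hn (mem_S_of_le (by omega) (by omega))
  refine le_antisymm (csSup_le' hbound) ?_
  rcases ha.eq_or_lt with rfl | ha
  · simp
  · exact le_csSup ⟨_, hbound⟩ (sub_one_notMem_S ha)
end
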